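/- arXiv:1905.05546 — 5 statements merged into one kernel-verified Lean document; each statement's English description precedes it below -/
import Mathlib

section
/- For every polynomial p of degree at most 2n that is nonnegative on [0,1], there exist polynomials a of degree at most n and b of degree at most n-1 such that p(x) = a(x)^2 + b(x)^2·x·(1-x) for all x. -/
/-!
Call `p` a Lukács polynomial of formal degree `m` if `p = a² + b² x(1-x)` (for even `m`) or
`p = a² x + b² (1-x)` (for odd `m`), each summand having degree at most `m`. A
Brahmagupta-type composition identity makes these representations multiplicative, with formal
degrees adding up. A polynomial of positive degree that is nonnegative on `[0,1]` has a factor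
of this kind of degree one or two: `|x - z|²` for a nonreal root `z`, `(x - r)²` for a root
`r ∈ (0,1)` (a local minimum, hence a double root), and a linear factor nonnegative on `[0,1]`
for any other real root. The cofactor is again nonnegative on `[0,1]`, and induction on the
degree concludes.
-/

open Polynomial Set

namespace Polynomial

section WeightedSumSq

variable {R : Type*} [CommRing R] [IsDomain R]

theorem degree_add_sq_mul_le {x y g : R[X]} {K : WithBot ℕ} (hx : (x ^ 2 * g).degree ≤ K)
    (hy : (y ^ 2 * g).degree ≤ K) : ((x + y) ^ 2 * g).degree ≤ K := by
  wlog hxy : x.degree ≤ y.degree generalizing x y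
  · rw [add_comm]; exact this hy hx (le_of_not_ge hxy)
  calc ((x + y) ^ 2 * g).degree = 2 • (x + y).degree + g.degree := by rw [degree_mul, degree_pow]
    _ ≤ 2 • y.degree + g.degree := by gcongr; exact (degree_add_le x y).trans (max_le hxy le_rfl)
    _ = (y ^ 2 * g).degree := by rw [degree_mul, degree_pow]
    _ ≤ K := hy

def IsWeightedSumSq (g h : R[X]) (m : ℕ) (p : R[X]) : Prop :=
  ∃ a b : R[X], p = a ^ 2 * g + b ^ 2 * h ∧ (a ^ 2 * g).degree ≤ m ∧ (b ^ 2 * h).degree ≤ m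

/-- `(a²g₁ + b²h₁)(c²g₂ + d²h₂) = (ace₁ + bde₂)²g + (ade₃ + bce₄)²h`, the cross terms
cancelling by `hcross`. -/
theorem IsWeightedSumSq.mul {g₁ h₁ g₂ h₂ g h : R[X]} (e₁ e₂ e₃ e₄ : R[X])
    (he₁ : e₁ ^ 2 * g = g₁ * g₂) (he₂ : e₂ ^ 2 * g = h₁ * h₂)
    (he₃ : e₃ ^ 2 * h = g₁ * h₂) (he₄ : e₄ ^ 2 * h = h₁ * g₂)
    (hcross : e₁ * e₂ * g + e₃ * e₄ * h = 0) {m l : ℕ} {p q : R[X]}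
    (hp : IsWeightedSumSq g₁ h₁ m p) (hq : IsWeightedSumSq g₂ h₂ l q) :
    IsWeightedSumSq g h (m + l) (p * q) := by
  obtain ⟨a, b, rfl, ha, hb⟩ := hp
  obtain ⟨c, d, rfl, hc, hd⟩ := hq
  have hprod {s t u : R[X]} {i j : ℕ} (hs : s.degree ≤ i) (ht : t.degree ≤ j) (hu : u = s * t) :
      u.degree ≤ (i + j : ℕ) := by
    rw [hu, Nat.cast_add]; exact degree_mul_le_of_le hs ht
  refine ⟨a * c * e₁ + b * d * e₂, a * d * e₃ + b * c * e₄, ?_,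
    degree_add_sq_mul_le (hprod ha hc ?_) (hprod hb hd ?_),
    degree_add_sq_mul_le (hprod ha hd ?_) (hprod hb hc ?_)⟩
  · linear_combination (-(a * c) ^ 2) * he₁ - (b * d) ^ 2 * he₂ - (a * d) ^ 2 * he₃
      - (b * c) ^ 2 * he₄ - 2 * a * b * c * d * hcross
  · linear_combination (a * c) ^ 2 * he₁
  · linear_combination (b * d) ^ 2 * he₂
  · linear_combination (a * d) ^ 2 * he₃
  · linear_combination (b * c) ^ 2 * he₄

end WeightedSumSq

theorem eval_nonneg_of_eval_mul_nonneg {a b : ℝ} (hab : a < b) {p q : ℝ[X]} (hq₀ : q ≠ 0)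
    (hq : ∀ x ∈ Icc a b, 0 ≤ q.eval x) (hqp : ∀ x ∈ Icc a b, 0 ≤ (q * p).eval x) :
    ∀ x ∈ Icc a b, 0 ≤ p.eval x := by
  have hdense : Dense {x | q.eval x ≠ 0} := (finite_setOfPred_isRoot hq₀).countable.dense_compl ℝ
  have hsub : Icc a b ⊆ closure (Ioo a b ∩ {x | q.eval x ≠ 0}) := by
    rw [← closure_Ioo hab.ne]
    exact closure_minimal (hdense.open_subset_closure_inter isOpen_Ioo) isClosed_closure
  have hnonneg : Ioo a b ∩ {x | q.eval x ≠ 0} ⊆ {x | 0 ≤ p.eval x} := by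
    rintro y ⟨hy, hqy⟩
    have hy' := Ioo_subset_Icc_self hy
    exact nonneg_of_mul_nonneg_right (by simpa using hqp y hy') ((hq y hy').lt_of_ne' hqy)
  exact fun x hx ↦ closure_minimal hnonneg (isClosed_le continuous_const p.continuous) (hsub hx)

theorem X_sub_C_sq_dvd_of_isLocalMin {p : ℝ[X]} {r : ℝ} (hr : p.IsRoot r)
    (hmin : IsLocalMin (fun x ↦ p.eval x) r) : (X - C r) ^ 2 ∣ p := by
  rcases eq_or_ne p 0 with rfl | hp
  · exact dvd_zero _
  have hder : p.derivative.IsRoot r := by simpa using hmin.deriv_eq_zero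
  exact (le_rootMultiplicity_iff hp).1 ((one_lt_rootMultiplicity_iff_isRoot hp).2 ⟨hr, hder⟩)

def IsLukacs (m : ℕ) (p : ℝ[X]) : Prop :=
  if Even m then IsWeightedSumSq 1 (X * (1 - X)) m p else IsWeightedSumSq X (1 - X) m p

namespace IsLukacs

variable {m l : ℕ} {p q : ℝ[X]}

theorem mul (hp : IsLukacs m p) (hq : IsLukacs l q) : IsLukacs (m + l) (p * q) := by
  by_cases hm : Even m <;> by_cases hl : Even l <;>
    simp only [IsLukacs, Nat.even_add, hm, hl, iff_self, iff_true, iff_false, if_true,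
      if_false] at hp hq ⊢
  · exact hp.mul 1 (-(X * (1 - X))) 1 1 (by ring) (by ring) (by ring) (by ring) (by ring) hq
  · exact hp.mul 1 (-(1 - X)) 1 X (by ring) (by ring) (by ring) (by ring) (by ring) hq
  · exact hp.mul 1 (-(1 - X)) X 1 (by ring) (by ring) (by ring) (by ring) (by ring) hq
  · exact hp.mul X (1 - X) 1 (-1) (by ring) (by ring) (by ring) (by ring) (by ring) hq

theorem one : IsLukacs 1 1 := by
  rw [IsLukacs, if_neg Nat.not_even_one]
  exact ⟨1, 1, by ring, by compute_degree!, by compute_degree!⟩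

theorem mono (hp : IsLukacs m p) (hml : m ≤ l) : IsLukacs l p := by
  induction l, hml using Nat.le_induction with
  | base => exact hp
  | succ l _ ih => simpa using ih.mul one

theorem eval_nonneg (hp : IsLukacs m p) {x : ℝ} (hx : x ∈ Icc 0 1) : 0 ≤ p.eval x := by
  have hx₀ := hx.1
  have hx₁ : 0 ≤ 1 - x := sub_nonneg.2 hx.2
  unfold IsLukacs at hp
  split_ifs at hp <;>
  · obtain ⟨a, b, rfl, -, -⟩ := hp
    simp only [eval_add, eval_mul, eval_pow, eval_X, eval_one, eval_sub]
    positivity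

theorem exists_of_two_mul {n : ℕ} (hp : IsLukacs (2 * n) p) :
    ∃ a b : ℝ[X], a.degree ≤ n ∧ b.degree < n ∧ p = a ^ 2 + b ^ 2 * (X * (1 - X)) := by
  rw [IsLukacs, if_pos (even_two_mul n)] at hp
  obtain ⟨a, b, rfl, ha, hb⟩ := hp
  refine ⟨a, b, ?_, ?_, by ring⟩
  · rw [mul_one, ← natDegree_le_iff_degree_le, natDegree_pow] at ha
    rw [← natDegree_le_iff_degree_le]
    omega
  · rcases eq_or_ne b 0 with rfl | hb₀
    · simp
    have hw : (X * (1 - X) : ℝ[X]).natDegree = 2 := by compute_degree!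
    have hw₀ : (X * (1 - X) : ℝ[X]) ≠ 0 := fun h ↦ by simp [h] at hw
    rw [← natDegree_le_iff_degree_le, natDegree_mul (pow_ne_zero 2 hb₀) hw₀, natDegree_pow,
      hw] at hb
    rw [← natDegree_lt_iff_degree_lt hb₀]
    omega

end IsLukacs

theorem isLukacs_C {c : ℝ} (hc : 0 ≤ c) : IsLukacs 0 (C c) := by
  rw [IsLukacs, if_pos Even.zero]
  refine ⟨C √c, 0, ?_, by compute_degree!, by simp⟩
  rw [← C_pow, Real.sq_sqrt hc]; ring

theorem isLukacs_C_mul_X_add_C_mul_one_sub_X {A B : ℝ} (hA : 0 ≤ A) (hB : 0 ≤ B) :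
    IsLukacs 1 (C A * X + C B * (1 - X)) := by
  rw [IsLukacs, if_neg Nat.not_even_one]
  refine ⟨C √A, C √B, ?_, by compute_degree!, by compute_degree!⟩
  rw [← C_pow, ← C_pow, Real.sq_sqrt hA, Real.sq_sqrt hB]

theorem isLukacs_X_sub_C_sq (r : ℝ) : IsLukacs 2 ((X - C r) ^ 2) := by
  rw [IsLukacs, if_pos even_two]
  exact ⟨X - C r, 0, by ring, by compute_degree!, by simp⟩

/-- With `s = ‖z‖` and `L = ‖z‖ + ‖1 - z‖ ≥ 1`, the quadratic `|X - z|²` equals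
`(s - L X)² + (L² - 1) X (1 - X)`: both sides agree at `0`, at `1` and in the leading term. -/
theorem isLukacs_normSq_X_sub (z : ℂ) : IsLukacs 2 (X ^ 2 - C (2 * z.re) * X + C (‖z‖ ^ 2)) := by
  rw [IsLukacs, if_pos even_two]
  set s := ‖z‖
  set L := ‖z‖ + ‖1 - z‖
  have hL : 1 ≤ L := by simpa using norm_add_le z (1 - z)
  have hs : s ^ 2 = z.re ^ 2 + z.im ^ 2 := by rw [Complex.sq_norm, Complex.normSq_apply]; ring
  have ht : ‖1 - z‖ ^ 2 = (1 - z.re) ^ 2 + z.im ^ 2 := by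
    rw [Complex.sq_norm, Complex.normSq_apply]; simp; ring
  have hre : 2 * z.re = 2 * s * L - L ^ 2 + 1 := by linear_combination ht - hs
  refine ⟨C s - C L * X, C √(L ^ 2 - 1), ?_, by compute_degree!, by compute_degree!⟩
  rw [← C_pow, Real.sq_sqrt (by nlinarith), hre]
  simp only [map_add, map_sub, map_mul, map_pow, map_one, map_ofNat]
  ring

theorem exists_isLukacs_dvd {p : ℝ[X]} (hp : 0 < p.degree)
    (hpos : ∀ x ∈ Icc (0 : ℝ) 1, 0 ≤ p.eval x) :
    ∃ q : ℝ[X], q ∣ p ∧ 0 < q.natDegree ∧ IsLukacs q.natDegree q := by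
  obtain ⟨z, hz⟩ := IsAlgClosed.exists_aeval_eq_zero ℂ p hp.ne'
  by_cases him : z.im ≠ 0
  · have hq : (X ^ 2 - C (2 * z.re) * X + C (‖z‖ ^ 2)).natDegree = 2 := by compute_degree!
    refine ⟨_, p.quadratic_dvd_of_aeval_eq_zero_im_ne_zero hz him, by omega, ?_⟩
    rw [hq]
    exact isLukacs_normSq_X_sub z
  have hr : p.IsRoot z.re := by
    have hz' : z = algebraMap ℝ ℂ z.re := Complex.ext (by simp) (by simpa using him)
    rw [hz', aeval_algebraMap_apply] at hz
    simpa using hz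
  set r := z.re
  rcases le_or_gt r 0 with hr₀ | hr₀
  · refine ⟨X - C r, dvd_iff_isRoot.2 hr, by simp, ?_⟩
    rw [natDegree_X_sub_C, show X - C r = C (1 - r) * X + C (-r) * (1 - X) by
      simp only [map_sub, map_neg, map_one]; ring]
    exact isLukacs_C_mul_X_add_C_mul_one_sub_X (by linarith) (by linarith)
  rcases le_or_gt 1 r with hr₁ | hr₁
  · have hq : (C r - X).natDegree = 1 := by compute_degree!
    refine ⟨C r - X, by rw [← neg_sub]; exact neg_dvd.2 (dvd_iff_isRoot.2 hr), by omega, ?_⟩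
    rw [hq, show C r - X = C (r - 1) * X + C r * (1 - X) by simp only [map_sub, map_one]; ring]
    exact isLukacs_C_mul_X_add_C_mul_one_sub_X (by linarith) (by linarith)
  have hmin : IsLocalMin (fun x ↦ p.eval x) r := by
    filter_upwards [Ioo_mem_nhds hr₀ hr₁] with x hx
    rw [hr.eq_zero]
    exact hpos x (Ioo_subset_Icc_self hx)
  refine ⟨(X - C r) ^ 2, X_sub_C_sq_dvd_of_isLocalMin hr hmin, by simp, ?_⟩
  simpa using isLukacs_X_sub_C_sq r

theorem isLukacs_of_nonneg (m : ℕ) {p : ℝ[X]} (hdeg : p.natDegree ≤ m)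
    (hpos : ∀ x ∈ Icc (0 : ℝ) 1, 0 ≤ p.eval x) : IsLukacs m p := by
  induction m using Nat.strong_induction_on generalizing p with | _ m ih => ?_
  rcases le_or_gt p.degree 0 with hp | hp
  · rw [eq_C_of_degree_le_zero hp] at hpos ⊢
    exact (isLukacs_C (by simpa using hpos 0 (by simp))).mono (Nat.zero_le m)
  obtain ⟨q, ⟨p₁, rfl⟩, hq, hql⟩ := exists_isLukacs_dvd hp hpos
  have hq₀ : q ≠ 0 := ne_zero_of_natDegree_gt hq
  have hp₁ : p₁ ≠ 0 := right_ne_zero_of_mul (ne_zero_of_degree_gt hp)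
  rw [natDegree_mul hq₀ hp₁] at hdeg
  have h := hql.mul (ih (m - q.natDegree) (by omega) (by omega)
    (eval_nonneg_of_eval_mul_nonneg zero_lt_one hq₀ (fun _ hx ↦ hql.eval_nonneg hx) hpos))
  rwa [Nat.add_sub_cancel' (by omega)] at h

end Polynomial

/-- Lukács theorem, even degree case. -/
theorem lukacs_even (n : ℕ) (p : Polynomial ℝ)
    (hdeg : p.degree ≤ (2 * n : ℕ))
    (hpos : ∀ x ∈ Set.Icc (0:ℝ) 1, 0 ≤ p.eval x) :
    ∃ a b : Polynomial ℝ, a.degree ≤ (n : ℕ) ∧ b.degree < (n : ℕ) ∧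
      ∀ x : ℝ, p.eval x = (a.eval x)^2 + (b.eval x)^2 * (x * (1 - x)) := by
  obtain ⟨a, b, ha, hb, rfl⟩ :=
    (isLukacs_of_nonneg (2 * n) (natDegree_le_iff_degree_le.2 hdeg) hpos).exists_of_two_mul
  exact ⟨a, b, ha, hb, fun x ↦ by simp⟩
end

section
/- With notation as in the Chebyshev expansion of a quadruplet q = (a,b,c,d) of degree n ≥ 2, the second leading coefficient of M(q) = a^2 + b^2 w + c^2 + d^2 w in the shifted Chebyshev basis of the first kind is M(q)_{2n−1} = a_n a_{n−1} − b_n b_{n−1} + c_n c_{n−1} − d_n d_{n−1}. -/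
/-!
Substituting `x = (t + 1) / 2` turns the shifted families into the classical ones: the shifted
`T_i(x)` is `Tᵢ(t)`, the shifted `U_i(x)` is `2 U_{i-1}(t)`, and `w(x) = (1 - t²) / 4`, so `M(q)`
becomes `A² + (1 - t²) B² + C² + (1 - t²) D²` with `A = ∑ aᵢ Tᵢ`, `B = ∑ bᵢ U_{i-1}`, and so on.
By parity, `Tₖ` and `Uₖ` have no `t^(k-1)` term, so the top two monomial coefficients of `A` are
`2^(n-1) aₙ` and `2^(n-2) aₙ₋₁`, and likewise for `B`, `C`, `D`. Comparing the coefficients of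
`t^(2n-1)` on both sides gives
`2^(2n-2) M_{2n-1} = 2^(2n-2) (aₙ aₙ₋₁ - bₙ bₙ₋₁ + cₙ cₙ₋₁ - dₙ dₙ₋₁)`.
-/

open Polynomial

open Finset in
theorem Polynomial.coeff_sq_of_natDegree_le {R : Type*} [CommSemiring R] {p : R[X]} {n : ℕ}
    (hp : p.natDegree ≤ n + 1) : (p ^ 2).coeff (2 * n + 1) = 2 * p.coeff (n + 1) * p.coeff n := by
  have hvanish : ∀ i, n + 1 < i → p.coeff i = 0 := fun i hi =>
    coeff_eq_zero_of_natDegree_lt (hp.trans_lt hi)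
  rw [sq, coeff_mul, sum_eq_add (n, n + 1) (n + 1, n) (by simp)]
  · ring
  · rintro ⟨i, j⟩ hij hne
    rw [HasAntidiagonal.mem_antidiagonal] at hij
    rcases le_or_gt i (n + 1) with hi | hi
    · rw [hvanish j (by grind), mul_zero]
    · rw [hvanish i hi, zero_mul]
  all_goals exact fun h => absurd (HasAntidiagonal.mem_antidiagonal.2 (by omega)) h

theorem Polynomial.coeff_sq_mul_one_sub_X_sq {R : Type*} [CommRing R] {p : R[X]} {n : ℕ}
    (hp : p.natDegree ≤ n + 1) :
    (p ^ 2 * (1 - X ^ 2)).coeff (2 * n + 3) = -(2 * p.coeff (n + 1) * p.coeff n) := by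
  have htop : (p ^ 2).coeff (2 * n + 3) = 0 :=
    coeff_eq_zero_of_natDegree_lt ((natDegree_pow_le_of_le 2 hp).trans_lt (by omega))
  rw [mul_sub, mul_one, coeff_sub, htop, show 2 * n + 3 = 2 * n + 1 + 2 by ring, coeff_mul_X_pow,
    coeff_sq_of_natDegree_le hp, zero_sub]

section SeriesCoeff

variable {R : Type*} [Semiring R] {p : ℕ → R[X]} (c : ℕ → R)

theorem Polynomial.natDegree_sum_range_C_mul_le (hdeg : ∀ i, (p i).natDegree ≤ i) (N : ℕ) :
    (∑ i ∈ Finset.range (N + 1), C (c i) * p i).natDegree ≤ N :=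
  natDegree_sum_le_of_forall_le _ _ fun i hi =>
    (natDegree_C_mul_le _ _).trans ((hdeg i).trans (Nat.lt_succ_iff.1 (Finset.mem_range.1 hi)))

theorem Polynomial.coeff_sum_range_C_mul (hdeg : ∀ i, (p i).natDegree ≤ i)
    (hsub : ∀ i, (p (i + 1)).coeff i = 0) {M N : ℕ} (hNM : N < M) (hMN : M ≤ N + 2) :
    (∑ i ∈ Finset.range M, C (c i) * p i).coeff N = c N * (p N).coeff N := by
  rw [finsetSum_coeff, Finset.sum_eq_single N _ (by simp [hNM]), coeff_C_mul]
  intro i hi hiN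
  rw [coeff_C_mul]
  rcases lt_or_gt_of_ne hiN with hlt | hgt
  · rw [coeff_eq_zero_of_natDegree_lt ((hdeg i).trans_lt hlt), mul_zero]
  · obtain rfl : i = N + 1 := by grind
    rw [hsub, mul_zero]

end SeriesCoeff

theorem Polynomial.comp_two_mul_X_sub_one_injective {K : Type*} [Field K] [NeZero (2 : K)] :
    Function.Injective fun p : K[X] => p.comp (2 * X - 1) := by
  intro p q h
  have hhalf : (2 : K[X]) * C 2⁻¹ = 1 := by
    rw [← C_ofNat, ← C_mul, mul_inv_cancel₀ two_ne_zero, C_1]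
  have hinv : (2 * X - 1 : K[X]).comp (C 2⁻¹ * (X + 1)) = X := by
    simp only [sub_comp, mul_comp, ofNat_comp, X_comp, one_comp, Nat.cast_ofNat]
    linear_combination (X + 1) * hhalf
  have h' := congrArg (·.comp (C 2⁻¹ * (X + 1))) h
  simpa only [comp_assoc, hinv, comp_X] using h'

open Real in
theorem Polynomial.eq_of_eval_cos_add_one_div_two_eq {p q : ℝ[X]}
    (h : ∀ θ, sin θ ≠ 0 → p.eval ((cos θ + 1) / 2) = q.eval ((cos θ + 1) / 2)) : p = q := by
  refine eq_of_infinite_eval_eq p q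
    (Set.Infinite.mono (s := Set.Ioo 0 1) ?_ (Set.Ioo_infinite one_pos))
  intro x ⟨hx0, hx1⟩
  have hcos : cos (arccos (2 * x - 1)) = 2 * x - 1 := cos_arccos (by linarith) (by linarith)
  have hsin : sin (arccos (2 * x - 1)) ≠ 0 := by
    rw [sin_arccos]
    exact (sqrt_pos.2 (by nlinarith)).ne'
  simpa [hcos] using h _ hsin

theorem Finset.sum_Icc_one_eq_sum_range {M : Type*} [AddCommMonoid M] (f : ℕ → M) (n : ℕ) :
    ∑ i ∈ Icc 1 n, f i = ∑ i ∈ range n, f (i + 1) := by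
  rw [range_eq_Ico, sum_Ico_add', zero_add, Ico_add_one_right_eq_Icc]

namespace Polynomial.Chebyshev

variable (R : Type*) [CommRing R]

theorem coeff_eq_zero_of_odd_of_recurrence {p : ℕ → R[X]}
    (hrec : ∀ k, p (k + 2) = 2 * X * p (k + 1) - p k)
    (h0 : ∀ j, Odd j → (p 0).coeff j = 0) (h1 : ∀ j, Even j → (p 1).coeff j = 0) :
    ∀ k j, Odd (k + j) → (p k).coeff j = 0 := by
  intro k
  induction k using Nat.twoStepInduction with
  | zero => simpa using h0
  | one => exact fun j hj => h1 j (by grind)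
  | more k ih0 ih1 =>
    intro j hj
    rw [hrec, coeff_sub, mul_assoc, ← C_ofNat, coeff_C_mul, ih0 j (by grind)]
    cases j with
    | zero => simp
    | succ j => rw [coeff_X_mul, ih1 j (by grind), mul_zero, sub_zero]

theorem coeff_T_eq_zero_of_odd {k j : ℕ} (h : Odd (k + j)) : (T R k).coeff j = 0 :=
  coeff_eq_zero_of_odd_of_recurrence R (p := fun k : ℕ => T R k)
    (fun k => by exact_mod_cast T_add_two R k) (by simp [coeff_one]; grind)
    (by simp [coeff_X]; grind) k j h

theorem coeff_U_eq_zero_of_odd {k j : ℕ} (h : Odd (k + j)) : (U R k).coeff j = 0 :=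
  coeff_eq_zero_of_odd_of_recurrence R (p := fun k : ℕ => U R k)
    (fun k => by exact_mod_cast U_add_two R k) (by simp [coeff_one]; grind)
    (by simp [coeff_X]; grind) k j h

variable [IsDomain R] [NeZero (2 : R)]

theorem coeff_T_natCast_self (k : ℕ) : (T R k).coeff k = 2 ^ (k - 1) := by
  simpa using (coeff_natDegree (p := T R k))

theorem coeff_U_natCast_self (k : ℕ) : (U R k).coeff k = 2 ^ k := by
  simpa using (coeff_natDegree (p := U R k))

end Polynomial.Chebyshev

section ChebyshevSeries

variable {R : Type*} [CommRing R] [IsDomain R] [NeZero (2 : R)] (c : ℕ → R)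

theorem Polynomial.Chebyshev.coeff_sum_range_C_mul_T {M N : ℕ} (hNM : N < M) (hMN : M ≤ N + 2) :
    (∑ i ∈ Finset.range M, Polynomial.C (c i) * T R i).coeff N = c N * 2 ^ (N - 1) := by
  rw [coeff_sum_range_C_mul c (fun i => by simp) (fun i => coeff_T_eq_zero_of_odd R ⟨i, by ring⟩)
    hNM hMN, coeff_T_natCast_self]

theorem Polynomial.Chebyshev.coeff_sum_range_C_mul_U {M N : ℕ} (hNM : N < M) (hMN : M ≤ N + 2) :
    (∑ i ∈ Finset.range M, Polynomial.C (c i) * U R i).coeff N = c N * 2 ^ N := by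
  rw [coeff_sum_range_C_mul c (fun i => by simp) (fun i => coeff_U_eq_zero_of_odd R ⟨i, by ring⟩)
    hNM hMN, coeff_U_natCast_self]

theorem Polynomial.Chebyshev.coeff_sq_sum_range_C_mul_T (k : ℕ) :
    ((∑ i ∈ Finset.range (k + 3), Polynomial.C (c i) * T R i) ^ 2).coeff (2 * k + 3)
      = 2 ^ (2 * k + 2) * c (k + 2) * c (k + 1) := by
  rw [show 2 * k + 3 = 2 * (k + 1) + 1 by ring,
    coeff_sq_of_natDegree_le (natDegree_sum_range_C_mul_le c (fun i => by simp) (k + 2)),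
    coeff_sum_range_C_mul_T c (M := k + 3) (N := k + 2) (by omega) (by omega),
    coeff_sum_range_C_mul_T c (M := k + 3) (N := k + 1) (by omega) (by omega),
    Nat.add_sub_cancel, show k + 2 - 1 = k + 1 by omega]
  ring

theorem Polynomial.Chebyshev.coeff_sq_sum_range_C_mul_U_mul_one_sub_X_sq (k : ℕ) :
    ((∑ i ∈ Finset.range (k + 2), Polynomial.C (c i) * U R i) ^ 2 * (1 - X ^ 2)).coeff (2 * k + 3)
      = -(2 ^ (2 * k + 2) * c (k + 1) * c k) := by
  rw [coeff_sq_mul_one_sub_X_sq (natDegree_sum_range_C_mul_le c (fun i => by simp) (k + 1)),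
    coeff_sum_range_C_mul_U c (M := k + 2) (N := k + 1) (by omega) (by omega),
    coeff_sum_range_C_mul_U c (M := k + 2) (N := k) (by omega) (by omega)]
  ring

end ChebyshevSeries

section ShiftedChebyshev

open Real

theorem Polynomial.eq_T_comp_of_eval_cos {p : ℝ[X]} {i : ℕ}
    (h : ∀ θ, p.eval ((cos θ + 1) / 2) = cos (i * θ)) :
    p = (Chebyshev.T ℝ i).comp (2 * X - 1) := by
  refine eq_of_eval_cos_add_one_div_two_eq fun θ _ => ?_
  have hx : (2 * X - 1 : ℝ[X]).eval ((cos θ + 1) / 2) = cos θ := by simp; ring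
  rw [h, eval_comp, hx, Chebyshev.T_real_cos]
  norm_cast

theorem Polynomial.eq_two_mul_U_comp_of_eval_cos {p : ℝ[X]} {i : ℕ}
    (h : ∀ θ, sin θ ≠ 0 → p.eval ((cos θ + 1) / 2) = 2 * sin ((i + 1 : ℕ) * θ) / sin θ) :
    p = (2 * Chebyshev.U ℝ i).comp (2 * X - 1) := by
  refine eq_of_eval_cos_add_one_div_two_eq fun θ hθ => ?_
  have hU := Chebyshev.U_real_cos θ i
  have hx : (2 * X - 1 : ℝ[X]).eval ((cos θ + 1) / 2) = cos θ := by simp; ring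
  rw [h θ hθ, eval_comp, hx, eval_mul, eval_ofNat]
  push_cast at hU ⊢
  field_simp
  linear_combination -hU

theorem Polynomial.sq_sum_C_mul_mul_X_mul_one_sub_X {p : ℕ → ℝ[X]}
    (hp : ∀ i, p (i + 1) = (2 * Chebyshev.U ℝ i).comp (2 * X - 1)) (c : ℕ → ℝ) (n : ℕ) :
    (∑ i ∈ Finset.Icc 1 n, C (c i) * p i) ^ 2 * (X * (1 - X))
      = ((∑ i ∈ Finset.range n, C (c (i + 1)) * Chebyshev.U ℝ i) ^ 2 * (1 - X ^ 2)).comp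
          (2 * X - 1) := by
  rw [Finset.sum_Icc_one_eq_sum_range]
  simp only [hp, mul_comp, pow_comp, sub_comp, one_comp, X_comp, C_comp, ofNat_comp,
    Nat.cast_ofNat, sum_comp, mul_left_comm _ (2 : ℝ[X]), ← Finset.mul_sum]
  ring

end ShiftedChebyshev

/-- The second leading Chebyshev coefficient of `M(q) = a² + b²w + c² + d²w`, for `n ≥ 2`. -/
theorem modulus_second_coeff (n : ℕ) (hn : 2 ≤ n)
    (T U : ℕ → Polynomial ℝ)
    (hT : ∀ (i : ℕ) (θ : ℝ), (T i).eval ((Real.cos θ + 1)/2) = Real.cos (i * θ))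
    (hU : ∀ (i : ℕ) (θ : ℝ), Real.sin θ ≠ 0 →
      (U i).eval ((Real.cos θ + 1)/2) = 2 * Real.sin (i * θ) / Real.sin θ)
    (ca cb cc cd m : ℕ → ℝ)
    (hM : (∑ i ∈ Finset.range (n+1), Polynomial.C (ca i) * T i)^2
        + (∑ i ∈ Finset.Icc 1 n, Polynomial.C (cb i) * U i)^2 * (X * (1 - X))
        + (∑ i ∈ Finset.range (n+1), Polynomial.C (cc i) * T i)^2
        + (∑ i ∈ Finset.Icc 1 n, Polynomial.C (cd i) * U i)^2 * (X * (1 - X))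
        = ∑ i ∈ Finset.range (2*n+1), Polynomial.C (m i) * T i) :
    m (2*n - 1) = ca n * ca (n-1) - cb n * cb (n-1) + cc n * cc (n-1) - cd n * cd (n-1) := by
  obtain ⟨k, rfl⟩ : ∃ k, n = k + 2 := ⟨n - 2, by omega⟩
  have hT' (c : ℕ → ℝ) (N : ℕ) : ∑ i ∈ Finset.range N, C (c i) * T i
      = (∑ i ∈ Finset.range N, C (c i) * Chebyshev.T ℝ i).comp (2 * X - 1) := by
    simp only [sum_comp, mul_comp, C_comp, ← eq_T_comp_of_eval_cos (hT _)]
  have hU' := sq_sum_C_mul_mul_X_mul_one_sub_X fun i => eq_two_mul_U_comp_of_eval_cos (hU (i + 1))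
  rw [hT', hT', hT', hU', hU'] at hM
  simp only [← pow_comp, ← add_comp] at hM
  have hcoeff := congrArg (coeff · (2 * k + 3)) (comp_two_mul_X_sub_one_injective hM)
  simp only [coeff_add, Chebyshev.coeff_sq_sum_range_C_mul_T,
    Chebyshev.coeff_sq_sum_range_C_mul_U_mul_one_sub_X_sq] at hcoeff
  rw [Chebyshev.coeff_sum_range_C_mul_T m (by omega) (by omega),
    show 2 * k + 3 - 1 = 2 * k + 2 by omega] at hcoeff
  rw [show 2 * (k + 2) - 1 = 2 * k + 3 by omega, show k + 2 - 1 = k + 1 by omega]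
  refine mul_left_cancel₀ (pow_ne_zero (2 * k + 2) (two_ne_zero : (2 : ℝ) ≠ 0)) ?_
  linear_combination -hcoeff
end

section
/- For polynomial quadruplets, if e ∈ U_∞ (i.e., M(e) = 1) and q is any quadruplet, then ⦀eq⦀ = ⦀q⦀, where ⦀q⦀² = ∫₀¹ (a² + c²) w^{−1/2} + (b² + d²) w^{1/2} dx for q = (a,b,c,d) and w(x) = x(1−x). -/
open Polynomial

/-- The weight `w(x) = x(1-x)`. -/
noncomputable def w : Polynomial ℝ := X * (1 - X)

/-- Quadruplets of real polynomials. -/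
abbrev Quad := Polynomial ℝ × Polynomial ℝ × Polynomial ℝ × Polynomial ℝ

/-- The weighted Euler four-square multiplication of quadruplets. -/
noncomputable def qmul (r q : Quad) : Quad :=
  ⟨r.1*q.1 - r.2.1*q.2.1*w - r.2.2.1*q.2.2.1 - r.2.2.2*q.2.2.2*w,
   r.2.1*q.1 + r.1*q.2.1 - r.2.2.2*q.2.2.1 + r.2.2.1*q.2.2.2,
   r.2.2.1*q.1 + r.2.2.2*q.2.1*w + r.1*q.2.2.1 - r.2.1*q.2.2.2*w,
   r.2.2.2*q.1 - r.2.2.1*q.2.1 + r.2.1*q.2.2.1 + r.1*q.2.2.2⟩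

/-- The modulus `M(a,b,c,d) = a² + b²w + c² + d²w`. -/
noncomputable def Mq (q : Quad) : Polynomial ℝ :=
  q.1^2 + q.2.1^2*w + q.2.2.1^2 + q.2.2.2^2*w

/-- The quadruplet norm: `⦀q⦀² = ∫₀¹ (a²+c²) w^{-1/2} + (b²+d²) w^{1/2}`. -/
noncomputable def qnrm (q : Quad) : ℝ :=
  Real.sqrt (∫ x in (0:ℝ)..1,
    (((q.1.eval x)^2 + (q.2.2.1.eval x)^2) / Real.sqrt (x * (1 - x))
      + ((q.2.1.eval x)^2 + (q.2.2.2.eval x)^2) * Real.sqrt (x * (1 - x))))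

lemma Mq_qmul (e q : Quad) : Mq (qmul e q) = Mq e * Mq q := by
  obtain ⟨a, b, c, d⟩ := e
  obtain ⟨p, r, s, t⟩ := q
  simp only [Mq, qmul]
  ring

/-- Multiplying by an element of `U_∞` preserves the quadruplet norm. -/
theorem qnrm_qmul (e q : Quad) (he : Mq e = 1) : qnrm (qmul e q) = qnrm q := by
  have hM : Mq (qmul e q) = Mq q := by rw [Mq_qmul, he, one_mul]
  unfold qnrm
  congr 1
  apply intervalIntegral.integral_congr_ae
  filter_upwards with x hx
  rw [Set.uIoc_of_le (by norm_num : (0:ℝ) ≤ 1)] at hx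
  have hx0 : 0 < x := hx.1
  rcases eq_or_lt_of_le hx.2 with h1 | h1
  · have : x * (1 - x) = 0 := by rw [h1]; ring
    rw [this, Real.sqrt_zero, div_zero, div_zero, mul_zero, mul_zero]
  · have hw : 0 < x * (1 - x) := mul_pos hx0 (by linarith)
    have hs : 0 < Real.sqrt (x * (1 - x)) := Real.sqrt_pos.mpr hw
    have hsq : Real.sqrt (x * (1 - x)) ^ 2 = x * (1 - x) := Real.sq_sqrt hw.le
    have hMx := congrArg (Polynomial.eval x) hM
    simp only [Mq, w, Polynomial.eval_add, Polynomial.eval_mul, Polynomial.eval_pow,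
      Polynomial.eval_sub, Polynomial.eval_one, Polynomial.eval_X] at hMx
    set s := Real.sqrt (x * (1 - x)) with hsdef
    have key : ∀ A B C D : ℝ,
        (A ^ 2 + C ^ 2) / s + (B ^ 2 + D ^ 2) * s
          = (A ^ 2 + B ^ 2 * (x * (1 - x)) + C ^ 2 + D ^ 2 * (x * (1 - x))) / s := by
      intro A B C D
      rw [← hsq]
      field_simp
      ring
    rw [key, key, hMx]
end

section
/- Let A = diag(S,−S,S,−S) and B = diag(T,−T,T,−T) be 8×8 block-diagonal matrices with S = [[1,0],[0,0]] and T = [[0,1],[1,0]], and M_{λ,μ} = I + λA + μB. Then the set D = {(λ,μ) ∈ ℝ² : M_{λ,μ} > 0 (positive definite)} equals {(λ,μ) : |λ| + μ² < 1}. -/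
open Matrix

/-!
The quadratic form of `M λ μ` splits over the four 2×2 diagonal blocks into binary forms
`(1 ± λ) a² ± 2μ a b + b² = (1 ± λ - μ²) a² + (μ a ± b)²`, so `M λ μ` is positive definite
exactly when `μ² < 1 + λ` and `μ² < 1 - λ`, i.e. when `|λ| + μ² < 1`.
-/

/-- The 8×8 matrix `A = diag(S, -S, S, -S)` with `S = [[1,0],[0,0]]`. -/
noncomputable def A : Matrix (Fin 8) (Fin 8) ℝ :=
  !![1,0,0,0,0,0,0,0;
     0,0,0,0,0,0,0,0;
     0,0,-1,0,0,0,0,0;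
     0,0,0,0,0,0,0,0;
     0,0,0,0,1,0,0,0;
     0,0,0,0,0,0,0,0;
     0,0,0,0,0,0,-1,0;
     0,0,0,0,0,0,0,0]

/-- The 8×8 matrix `B = diag(T, -T, T, -T)` with `T = [[0,1],[1,0]]`. -/
noncomputable def B : Matrix (Fin 8) (Fin 8) ℝ :=
  !![0,1,0,0,0,0,0,0;
     1,0,0,0,0,0,0,0;
     0,0,0,-1,0,0,0,0;
     0,0,-1,0,0,0,0,0;
     0,0,0,0,0,1,0,0;
     0,0,0,0,1,0,0,0;
     0,0,0,0,0,0,0,-1;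
     0,0,0,0,0,0,-1,0]

/-- The matrix `M_{λ,μ} = I + λA + μB`. -/
noncomputable def M (l m : ℝ) : Matrix (Fin 8) (Fin 8) ℝ := 1 + l • A + m • B

def binaryForm (c m a b : ℝ) : ℝ := c * a ^ 2 + 2 * m * a * b + b ^ 2

lemma binaryForm_eq_add_sq (c m a b : ℝ) :
    binaryForm c m a b = (c - m ^ 2) * a ^ 2 + (m * a + b) ^ 2 := by
  unfold binaryForm; ring

@[simp]
lemma binaryForm_zero_zero (c m : ℝ) : binaryForm c m 0 0 = 0 := by
  simp [binaryForm]

lemma binaryForm_one_neg (c m : ℝ) : binaryForm c m 1 (-m) = c - m ^ 2 := by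
  unfold binaryForm; ring

lemma binaryForm_nonneg {c m : ℝ} (h : m ^ 2 ≤ c) (a b : ℝ) : 0 ≤ binaryForm c m a b := by
  rw [binaryForm_eq_add_sq]
  have : 0 ≤ c - m ^ 2 := sub_nonneg.mpr h
  positivity

lemma binaryForm_eq_zero_iff {c m : ℝ} (h : m ^ 2 < c) {a b : ℝ} :
    binaryForm c m a b = 0 ↔ a = 0 ∧ b = 0 := by
  refine ⟨fun h0 => ?_, fun ⟨ha, hb⟩ => by simp [binaryForm, ha, hb]⟩
  have hc : 0 < c - m ^ 2 := sub_pos.mpr h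
  rw [binaryForm_eq_add_sq] at h0
  obtain ⟨ha, hb⟩ := (add_eq_zero_iff_of_nonneg (by positivity) (by positivity)).mp h0
  obtain rfl : a = 0 := by simpa [hc.ne'] using ha
  simpa using hb

lemma isHermitian_M (l m : ℝ) : (M l m).IsHermitian := by
  ext i j
  fin_cases i <;> fin_cases j <;> simp [M, A, B]

lemma dotProduct_M_mulVec (l m : ℝ) (x : Fin 8 → ℝ) :
    x ⬝ᵥ M l m *ᵥ x = binaryForm (1 + l) m (x 0) (x 1) + binaryForm (1 - l) m (x 2) (-x 3)
      + binaryForm (1 + l) m (x 4) (x 5) + binaryForm (1 - l) m (x 6) (-x 7) := by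
  simp [M, A, B, binaryForm, mulVec, dotProduct, Fin.sum_univ_succ, Matrix.one_apply]
  ring

lemma posDef_M_iff (l m : ℝ) : (M l m).PosDef ↔ m ^ 2 < 1 + l ∧ m ^ 2 < 1 - l := by
  simp only [posDef_iff_dotProduct_mulVec, star_trivial, dotProduct_M_mulVec]
  refine ⟨fun ⟨_, hpos⟩ => ⟨?_, ?_⟩, fun ⟨hp, hn⟩ => ⟨isHermitian_M l m, fun x hx => ?_⟩⟩
  · simpa [binaryForm_one_neg] using hpos (x := ![1, -m, 0, 0, 0, 0, 0, 0])
      (by simp [funext_iff, Fin.forall_fin_succ])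
  · simpa [binaryForm_one_neg] using hpos (x := ![0, 0, 1, m, 0, 0, 0, 0])
      (by simp [funext_iff, Fin.forall_fin_succ])
  · have h₁ := binaryForm_nonneg hp.le (x 0) (x 1)
    have h₂ := binaryForm_nonneg hn.le (x 2) (-x 3)
    have h₃ := binaryForm_nonneg hp.le (x 4) (x 5)
    have h₄ := binaryForm_nonneg hn.le (x 6) (-x 7)
    by_contra! hle
    have e₁ := (binaryForm_eq_zero_iff hp (a := x 0) (b := x 1)).mp (by linarith)
    have e₂ := (binaryForm_eq_zero_iff hn (a := x 2) (b := -x 3)).mp (by linarith)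
    have e₃ := (binaryForm_eq_zero_iff hp (a := x 4) (b := x 5)).mp (by linarith)
    have e₄ := (binaryForm_eq_zero_iff hn (a := x 6) (b := -x 7)).mp (by linarith)
    rw [neg_eq_zero] at e₂ e₄
    exact hx (funext fun i => by fin_cases i <;> simp [e₁, e₂, e₃, e₄])

/-- The positive-definiteness domain of `M_{λ,μ}` is `{|λ| + μ² < 1}`. -/
theorem posDef_domain :
    {p : ℝ × ℝ | (M p.1 p.2).PosDef} = {p : ℝ × ℝ | |p.1| + p.2^2 < 1} := by
  ext ⟨l, m⟩
  rw [Set.mem_ofPred_eq, Set.mem_ofPred_eq, posDef_M_iff, ← lt_sub_iff_add_lt, abs_lt]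
  constructor <;> rintro ⟨h₁, h₂⟩ <;> constructor <;> linarith
end

section
/- Suppose (λ*,μ*) ∈ D is a critical point of G_X(λ,μ) = Xᵀ M_{λ,μ}^{−1} X, i.e., ∇G_X(λ*,μ*) = 0. Then Y* = M_{λ*,μ*}^{−1} X satisfies the constraints Y*ᵀ A Y* = 0 and Y*ᵀ B Y* = 0, i.e., Y* lies in the correction manifold V = {Y ∈ ℝ⁸ : YᵀAY = YᵀBY = 0}. -/
open Matrix

/-!
Differentiating `G_X = Xᵀ M⁻¹ X` with `∂ M⁻¹ = -M⁻¹ (∂M) M⁻¹` gives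
`∂_λ G_X = -Y*ᵀ A Y*` and `∂_μ G_X = -Y*ᵀ B Y*`, since `M⁻¹` is symmetric (`M` is positive
definite). So a critical point makes both constraints vanish.
-/

-- Matrices carry no global norm; any choice gives the product topology, which is all we use.
attribute [local instance] Matrix.linftyOpNormedRing Matrix.linftyOpNormedAlgebra

namespace Matrix

variable {n 𝕜 : Type*} [Fintype n] [DecidableEq n]

theorem dotProduct_mulVec_inv_mul_mul_inv [CommRing 𝕜] {N : Matrix n n 𝕜} (hN : N.IsSymm)
    (C : Matrix n n 𝕜) (X : n → 𝕜) :
    X ⬝ᵥ (N⁻¹ * C * N⁻¹) *ᵥ X = (N⁻¹ *ᵥ X) ⬝ᵥ C *ᵥ (N⁻¹ *ᵥ X) := by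
  rw [← mulVec_mulVec, ← mulVec_mulVec, dotProduct_mulVec, ← mulVec_transpose, hN.inv.eq]

variable [RCLike 𝕜] {E : Type*} [NormedAddCommGroup E] [NormedSpace 𝕜 E]

theorem hasFDerivAt_inv {N : Matrix n n 𝕜} (hN : IsUnit N) :
    HasFDerivAt (fun P : Matrix n n 𝕜 => P⁻¹)
      (-ContinuousLinearMap.mulLeftRight 𝕜 _ N⁻¹ N⁻¹) N := by
  obtain ⟨u, rfl⟩ := hN
  simpa only [nonsing_inv_eq_ringInverse, Ring.inverse_unit] using
    hasFDerivAt_ringInverse (𝕜 := 𝕜) u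

theorem fderiv_dotProduct_inv_mulVec_apply {f : E → Matrix n n 𝕜} {f' : E →L[𝕜] Matrix n n 𝕜}
    {x : E} (hf : HasFDerivAt f f' x) (hunit : IsUnit (f x)) (hsymm : (f x).IsSymm)
    (X : n → 𝕜) (v : E) :
    fderiv 𝕜 (fun p => X ⬝ᵥ (f p)⁻¹ *ᵥ X) x v =
      -((f x)⁻¹ *ᵥ X ⬝ᵥ f' v *ᵥ ((f x)⁻¹ *ᵥ X)) := by
  have hquad : HasFDerivAt (fun P : Matrix n n 𝕜 => X ⬝ᵥ P *ᵥ X) _ (f x)⁻¹ :=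
    ((dotProductBilin 𝕜 𝕜 X).comp ((mulVecBilin 𝕜 𝕜).flip X)).toContinuousLinearMap.hasFDerivAt
  have hG := hquad.comp x ((hasFDerivAt_inv hunit).comp x hf)
  rw [show (fun p => X ⬝ᵥ (f p)⁻¹ *ᵥ X) = (fun P => X ⬝ᵥ P *ᵥ X) ∘ (fun P => P⁻¹) ∘ f from rfl,
    hG.fderiv]
  change X ⬝ᵥ (-((f x)⁻¹ * f' v * (f x)⁻¹)) *ᵥ X = _
  rw [neg_mulVec, dotProduct_neg, dotProduct_mulVec_inv_mul_mul_inv hsymm]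

end Matrix

theorem hasFDerivAt_M (l m : ℝ) :
    HasFDerivAt (fun p : ℝ × ℝ => M p.1 p.2)
      ((ContinuousLinearMap.fst ℝ ℝ ℝ).smulRight A + (ContinuousLinearMap.snd ℝ ℝ ℝ).smulRight B)
      (l, m) :=
  ((ContinuousLinearMap.hasFDerivAt _).const_add 1).congr_of_eventuallyEq
    (.of_forall fun p => add_assoc 1 (p.1 • A) (p.2 • B))

/-- At a critical point of `G_X`, the vector `Y* = M⁻¹X` lies in the correction manifold
`V = {Y : YᵀAY = YᵀBY = 0}`. -/
theorem critical_point_in_manifold (X : Fin 8 → ℝ) (l m : ℝ)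
    (hpos : (M l m).PosDef)
    (hcrit : fderiv ℝ (fun p : ℝ × ℝ => X ⬝ᵥ ((M p.1 p.2)⁻¹).mulVec X) (l, m) = 0) :
    ((M l m)⁻¹.mulVec X) ⬝ᵥ A.mulVec ((M l m)⁻¹.mulVec X) = 0 ∧
    ((M l m)⁻¹.mulVec X) ⬝ᵥ B.mulVec ((M l m)⁻¹.mulVec X) = 0 := by
  have hsymm : (M l m).IsSymm := hpos.isHermitian
  have hpartial := fderiv_dotProduct_inv_mulVec_apply (hasFDerivAt_M l m) hpos.isUnit hsymm X
  rw [hcrit] at hpartial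
  constructor
  · simpa using (hpartial (1, 0)).symm
  · simpa using (hpartial (0, 1)).symm
end
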